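/- A finite co-Heyting algebra L satisfies the identity (x \ y) ⊓ (y \ x) = ⊥ for all x, y if and only if L embeds as a co-Heyting algebra into a finite direct product of finite chains. -/

import Mathlib

/-- `Ll b a` means `b ≪ a`: `a \ b = a` and `b ≤ a`. -/
def Ll {L : Type*} [CoheytingAlgebra L] (b a : L) : Prop := a \ b = a ∧ b ≤ a

/-- An embedding of co-Heyting algebras: injective and preserving `⊥`, `⊤`, `⊔`, `⊓`, `\`. -/
def IsCoheytingEmb {K L : Type*} [CoheytingAlgebra K] [CoheytingAlgebra L] (f : K → L) : Prop :=
  Function.Injective f ∧ f ⊥ = ⊥ ∧ f ⊤ = ⊤ ∧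
    (∀ a b, f (a ⊔ b) = f a ⊔ f b) ∧ (∀ a b, f (a ⊓ b) = f a ⊓ f b) ∧
    (∀ a b, f (a \ b) = f a \ f b)

/-!
Under the identity, two sup-irreducibles `q, r` with `q ⊓ r ≠ ⊥` are comparable: otherwise
`q \ r = q` and `r \ q = r` by primality, so `q ⊓ r = ⊥`. Hence for every sup-irreducible `p`
the sup-irreducibles above `p` form a finite chain, and `x ↦ #{q sup-irreducible | p ≤ q ≤ x}`
is a co-Heyting homomorphism to a finite chain. These maps separate points, as every element is
the join of the sup-irreducibles below it. Conversely, chains satisfy the identity, hence so do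
their products and everything embedding into them.
-/

open Set

section SupPrime

variable {α : Type*}

lemma le_of_forall_supIrred_le [SemilatticeSup α] [OrderBot α] [WellFoundedLT α] {x y : α}
    (h : ∀ p, SupIrred p → p ≤ x → p ≤ y) : x ≤ y := by
  obtain ⟨s, rfl, hs⟩ := exists_supIrred_decomposition x
  exact Finset.sup_le fun p hp => h p (hs hp) (Finset.le_sup (f := id) hp)

variable [CoheytingAlgebra α]

lemma SupPrime.sdiff_eq_self {q r : α} (hq : SupPrime q) (h : ¬ q ≤ r) : q \ r = q :=
  le_antisymm sdiff_le ((hq.le_sup.1 le_sup_sdiff).resolve_left h)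

lemma SupPrime.le_sdiff {m x y : α} (hm : SupPrime m) (hmx : m ≤ x) (hmy : ¬ m ≤ y) :
    m ≤ x \ y :=
  (hm.sdiff_eq_self hmy).ge.trans (sdiff_le_sdiff_right hmx)

lemma SupPrime.le_or_le_of_sdiff_inf_sdiff_eq_bot {q r : α} (hq : SupPrime q) (hr : SupPrime r)
    (h : q \ r ⊓ r \ q = ⊥) (hqr : q ⊓ r ≠ ⊥) : q ≤ r ∨ r ≤ q := by
  by_contra! hlt
  rw [hq.sdiff_eq_self hlt.1, hr.sdiff_eq_self hlt.2] at h
  exact hqr h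

/-- In the Birkhoff dual, `x \ y` is the down-closure of the difference of the down-sets. -/
lemma supIrred_le_sdiff_iff [Finite α] {q x y : α} (hq : SupIrred q) :
    q ≤ x \ y ↔ ∃ m, SupIrred m ∧ q ≤ m ∧ m ≤ x ∧ ¬ m ≤ y := by
  refine ⟨fun hqxy => ?_, fun ⟨m, hm, hqm, hmx, hmy⟩ => hqm.trans (hm.supPrime.le_sdiff hmx hmy)⟩
  by_contra! hxy
  set T := (toFinite {m | SupIrred m ∧ m ≤ x ∧ ¬ q ≤ m}).toFinset
  have hx : x ≤ y ⊔ T.sup id := le_of_forall_supIrred_le fun m hm hmx => by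
    by_cases hqm : q ≤ m
    · exact le_sup_of_le_left (hxy m hm hqm hmx)
    · exact le_sup_of_le_right (Finset.le_sup (f := id) ((Finite.mem_toFinset _).2 ⟨hm, hmx, hqm⟩))
  obtain ⟨m, hmT, hqm⟩ := hq.supPrime.le_finset_sup.1 (hqxy.trans (sdiff_le_iff.2 hx))
  exact ((Finite.mem_toFinset _).1 hmT).2.2 hqm

end SupPrime

lemma sdiff_inf_sdiff_eq_bot_of_total {C : Type*} [CoheytingAlgebra C]
    [Std.Total (α := C) (· ≤ ·)] (x y : C) : x \ y ⊓ y \ x = ⊥ := by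
  rcases total_of (· ≤ ·) x y with h | h <;> simp [sdiff_eq_bot_iff.2 h]

lemma IsCoheytingEmb.sdiff_inf_sdiff_eq_bot {K L : Type*} [CoheytingAlgebra K]
    [CoheytingAlgebra L] {f : K → L} (hf : IsCoheytingEmb f)
    (hL : ∀ x y : L, x \ y ⊓ y \ x = ⊥) (x y : K) :
    x \ y ⊓ y \ x = ⊥ := by
  obtain ⟨hinj, hbot, -, -, hinf, hsdiff⟩ := hf
  apply hinj
  rw [hinf, hsdiff, hsdiff, hbot, hL]

lemma isCoheytingEmb_of_coheytingHom {L ι : Type*} {C : ι → Type*} [CoheytingAlgebra L]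
    [∀ i, CoheytingAlgebra (C i)] (φ : ∀ i, CoheytingHom L (C i))
    (hφ : ∀ x y, (∀ i, φ i x = φ i y) → x = y) : IsCoheytingEmb fun x i => φ i x :=
  ⟨fun x y hxy => hφ x y (congrFun hxy), funext fun i => map_bot (φ i),
    funext fun i => map_top (φ i), fun a b => funext fun i => map_sup (φ i) a b,
    fun a b => funext fun i => map_inf (φ i) a b, fun a b => funext fun i => map_sdiff (φ i) a b⟩

namespace Set

variable {α : Type*} {s t : Set α}

lemma subset_iff_ncard_le_of_total (hst : s ⊆ t ∨ t ⊆ s) (hs : s.Finite) (ht : t.Finite) :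
    s ⊆ t ↔ s.ncard ≤ t.ncard := by
  refine ⟨fun h => ncard_le_ncard h ht, fun h => ?_⟩
  rcases hst with hst | hts
  · exact hst
  · exact (eq_of_subset_of_ncard_le hts h hs).ge

lemma ncard_union_of_total (hst : s ⊆ t ∨ t ⊆ s) (hs : s.Finite) (ht : t.Finite) :
    (s ∪ t).ncard = max s.ncard t.ncard := by
  rcases hst with h | h
  · rw [union_eq_right.2 h, max_eq_right (ncard_le_ncard h ht)]
  · rw [union_eq_left.2 h, max_eq_left (ncard_le_ncard h hs)]

lemma ncard_inter_of_total (hst : s ⊆ t ∨ t ⊆ s) (hs : s.Finite) (ht : t.Finite) :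
    (s ∩ t).ncard = min s.ncard t.ncard := by
  rcases hst with h | h
  · rw [inter_eq_left.2 h, min_eq_left (ncard_le_ncard h ht)]
  · rw [inter_eq_right.2 h, min_eq_right (ncard_le_ncard h hs)]

end Set

def CoheytingHom.ofRank {L : Type*} [CoheytingAlgebra L] (g : L → ℕ)
    (hsup : ∀ a b, g (a ⊔ b) = max (g a) (g b)) (hinf : ∀ a b, g (a ⊓ b) = min (g a) (g b))
    (hsdiff : ∀ a b, g (a \ b) = if g a ≤ g b then 0 else g a) :
    CoheytingHom L (Fin (g ⊤ + 1)) where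
  toFun x := ⟨g x, Nat.lt_succ_of_le (by simpa using (hsup x ⊤).ge)⟩
  map_sup' a b := Fin.ext (by simp [hsup])
  map_inf' a b := Fin.ext (by simp [hinf])
  map_top' := rfl
  map_sdiff' a b := by
    -- the difference of `Fin` is that of `LinearOrder.toBiheytingAlgebra`
    show _ = if _ then _ else _
    split_ifs with h <;> exact Fin.ext (by simp_all [Fin.mk_le_mk, bot_eq_zero])

section supIrredIcc

variable {L : Type*} [CoheytingAlgebra L] {p q r a b : L}

def supIrredIcc (p x : L) : Set L := {q | SupIrred q ∧ p ≤ q ∧ q ≤ x}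

lemma supIrredIcc_mono (p : L) : Monotone (supIrredIcc p) :=
  fun _ _ hxy _ ⟨hq, hpq, hqx⟩ => ⟨hq, hpq, hqx.trans hxy⟩

lemma supIrredIcc_sup : supIrredIcc p (a ⊔ b) = supIrredIcc p a ∪ supIrredIcc p b := by
  ext q
  simp only [supIrredIcc, mem_ofPred_eq, mem_union]
  constructor
  · rintro ⟨hq, hpq, hqab⟩
    exact (hq.supPrime.le_sup.1 hqab).imp (⟨hq, hpq, ·⟩) (⟨hq, hpq, ·⟩)
  · rintro (⟨hq, hpq, hqa⟩ | ⟨hq, hpq, hqb⟩)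
    exacts [⟨hq, hpq, le_sup_of_le_left hqa⟩, ⟨hq, hpq, le_sup_of_le_right hqb⟩]

lemma supIrredIcc_inf : supIrredIcc p (a ⊓ b) = supIrredIcc p a ∩ supIrredIcc p b := by
  ext q
  simp only [supIrredIcc, mem_ofPred_eq, mem_inter_iff, le_inf_iff]
  tauto

lemma supIrredIcc_sdiff_of_subset [Finite L] (hab : supIrredIcc p a ⊆ supIrredIcc p b) :
    supIrredIcc p (a \ b) = ∅ := by
  refine eq_empty_of_forall_notMem fun q ⟨hq, hpq, hqab⟩ => ?_
  obtain ⟨m, hm, hqm, hma, hmb⟩ := (supIrred_le_sdiff_iff hq).1 hqab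
  exact hmb (hab ⟨hm, hpq.trans hqm, hma⟩).2.2

variable (hL : ∀ x y : L, x \ y ⊓ y \ x = ⊥) (hp : p ≠ ⊥)
include hL hp

lemma le_or_le_of_mem_supIrredIcc (hq : q ∈ supIrredIcc p a) (hr : r ∈ supIrredIcc p b) :
    q ≤ r ∨ r ≤ q :=
  hq.1.supPrime.le_or_le_of_sdiff_inf_sdiff_eq_bot hr.1.supPrime (hL q r)
    fun h => hp (le_bot_iff.1 (h ▸ le_inf hq.2.1 hr.2.1))

lemma supIrredIcc_total (a b : L) :
    supIrredIcc p a ⊆ supIrredIcc p b ∨ supIrredIcc p b ⊆ supIrredIcc p a := by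
  by_contra! h
  obtain ⟨⟨q, hqa, hqb⟩, ⟨r, hrb, hra⟩⟩ := And.imp not_subset.1 not_subset.1 h
  rcases le_or_le_of_mem_supIrredIcc hL hp hqa hrb with hqr | hrq
  · exact hqb ⟨hqa.1, hqa.2.1, hqr.trans hrb.2.2⟩
  · exact hra ⟨hrb.1, hrb.2.1, hrq.trans hqa.2.2⟩

variable [Finite L]

lemma supIrredIcc_sdiff_of_not_subset (hab : ¬ supIrredIcc p a ⊆ supIrredIcc p b) :
    supIrredIcc p (a \ b) = supIrredIcc p a := by
  refine (supIrredIcc_mono p sdiff_le).antisymm fun q hqa => ?_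
  obtain ⟨m, hma, hmb⟩ := not_subset.1 hab
  have hmb' : ¬ m ≤ b := fun h => hmb ⟨hma.1, hma.2.1, h⟩
  refine ⟨hqa.1, hqa.2.1, (supIrred_le_sdiff_iff hqa.1).2 ?_⟩
  rcases le_or_le_of_mem_supIrredIcc hL hp hqa hma with hqm | hmq
  · exact ⟨m, hma.1, hqm, hma.2.2, hmb'⟩
  · exact ⟨q, hqa.1, le_rfl, hqa.2.2, fun hqb => hmb' (hmq.trans hqb)⟩

noncomputable def supIrredIccRank : CoheytingHom L (Fin ((supIrredIcc p ⊤).ncard + 1)) :=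
  CoheytingHom.ofRank (fun x => (supIrredIcc p x).ncard)
    (fun a b => by
      rw [supIrredIcc_sup, ncard_union_of_total (supIrredIcc_total hL hp a b) (toFinite _)
        (toFinite _)])
    (fun a b => by
      rw [supIrredIcc_inf, ncard_inter_of_total (supIrredIcc_total hL hp a b) (toFinite _)
        (toFinite _)])
    (fun a b => by
      have hsub := subset_iff_ncard_le_of_total (supIrredIcc_total hL hp a b) (toFinite _)
        (toFinite _)
      split_ifs with hab
      · rw [supIrredIcc_sdiff_of_subset (hsub.2 hab), ncard_empty]
      · rw [supIrredIcc_sdiff_of_not_subset hL hp (hab ∘ hsub.1)])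

omit hp in
lemma le_of_forall_ncard_supIrredIcc_le {x y : L}
    (h : ∀ p : L, SupIrred p → (supIrredIcc p x).ncard ≤ (supIrredIcc p y).ncard) : x ≤ y :=
  le_of_forall_supIrred_le fun p hp hpx =>
    have hxy := (subset_iff_ncard_le_of_total (supIrredIcc_total hL hp.ne_bot x y) (toFinite _)
      (toFinite _)).2 (h p hp)
    (hxy ⟨hp, le_rfl, hpx⟩).2.2

end supIrredIcc

theorem V6_iff_embeds_in_product_of_chains (L : Type*) [CoheytingAlgebra L] [Finite L] :
    (∀ x y : L, (x \ y) ⊓ (y \ x) = ⊥) ↔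
    ∃ (n : ℕ) (k : Fin n → ℕ) (f : L → ∀ i, Fin (k i + 1)), IsCoheytingEmb f := by
  constructor
  · intro hL
    let e := Finite.equivFin {p : L // SupIrred p}
    let φ i := supIrredIccRank hL (e.symm i).2.ne_bot
    refine ⟨_, _, _, isCoheytingEmb_of_coheytingHom φ fun x y hxy => ?_⟩
    have hrank (i) :
        (supIrredIcc (e.symm i : L) x).ncard = (supIrredIcc (e.symm i : L) y).ncard :=
      congrArg Fin.val (hxy i)
    exact le_antisymm
      (le_of_forall_ncard_supIrredIcc_le hL fun p hp => by simpa using (hrank (e ⟨p, hp⟩)).le)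
      (le_of_forall_ncard_supIrredIcc_le hL fun p hp => by simpa using (hrank (e ⟨p, hp⟩)).ge)
  · rintro ⟨n, k, f, hf⟩
    exact hf.sdiff_inf_sdiff_eq_bot fun x y => funext fun i =>
      sdiff_inf_sdiff_eq_bot_of_total (x i) (y i)
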